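/- arXiv:1512.02437 — 2 statements merged into one kernel-verified Lean document; each statement's English description precedes it below -/
import Mathlib

section
/- Define τ(A₁,A₂,A₃,A₄) = Tr(A₁·adj(A₂)·A₃·adj(A₄)) for 3×3 complex matrices. Then the function σ(A₁,A₂,A₃,A₄) = τ(A₁,A₂,A₃,A₄) + τ(A₁ᵀ,A₂ᵀ,A₃ᵀ,A₄ᵀ) is invariant under the simultaneous transformations Aᵢ ↦ U·Aᵢ·V for U,V ∈ SL(3,ℂ) and under simultaneous transposition Aᵢ ↦ Aᵢᵀ. -/
open Matrix

noncomputable def tau (A₁ A₂ A₃ A₄ : Matrix (Fin 3) (Fin 3) ℂ) : ℂ :=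
  Matrix.trace (A₁ * A₂.adjugate * A₃ * A₄.adjugate)

noncomputable def sigma (A₁ A₂ A₃ A₄ : Matrix (Fin 3) (Fin 3) ℂ) : ℂ :=
  tau A₁ A₂ A₃ A₄ + tau A₁ᵀ A₂ᵀ A₃ᵀ A₄ᵀ

lemma tau_inv (U V A₁ A₂ A₃ A₄ : Matrix (Fin 3) (Fin 3) ℂ)
    (hU : U.det = 1) (hV : V.det = 1) :
    tau (U*A₁*V) (U*A₂*V) (U*A₃*V) (U*A₄*V) = tau A₁ A₂ A₃ A₄ := by
  have hV' : V * V.adjugate = 1 := by rw [mul_adjugate, hV, one_smul]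
  have hU0 : U.adjugate * U = 1 := by rw [adjugate_mul, hU, one_smul]
  have cV : ∀ X : Matrix (Fin 3) (Fin 3) ℂ, X * V * V.adjugate = X := fun X => by
    rw [Matrix.mul_assoc, hV', Matrix.mul_one]
  have cU : ∀ X : Matrix (Fin 3) (Fin 3) ℂ, X * U.adjugate * U = X := fun X => by
    rw [Matrix.mul_assoc, hU0, Matrix.mul_one]
  simp only [tau, adjugate_mul_distrib, ← Matrix.mul_assoc]
  rw [Matrix.trace_mul_comm]
  simp only [← Matrix.mul_assoc]
  rw [hU0, Matrix.one_mul, cV, cU, cV]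

theorem sigma_invariant (A₁ A₂ A₃ A₄ : Matrix (Fin 3) (Fin 3) ℂ) :
    (∀ U V : Matrix (Fin 3) (Fin 3) ℂ, U.det = 1 → V.det = 1 →
        sigma (U*A₁*V) (U*A₂*V) (U*A₃*V) (U*A₄*V) = sigma A₁ A₂ A₃ A₄) ∧
      sigma A₁ᵀ A₂ᵀ A₃ᵀ A₄ᵀ = sigma A₁ A₂ A₃ A₄ := by
  constructor
  · intro U V hU hV
    have hUT : Uᵀ.det = 1 := by rwa [det_transpose]
    have hVT : Vᵀ.det = 1 := by rwa [det_transpose]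
    simp only [sigma, transpose_mul]
    rw [tau_inv U V A₁ A₂ A₃ A₄ hU hV]
    have := tau_inv Vᵀ Uᵀ A₁ᵀ A₂ᵀ A₃ᵀ A₄ᵀ hVT hUT
    simp only [← Matrix.mul_assoc] at this ⊢
    rw [this]
  · simp [sigma, transpose_transpose, add_comm]
end

section
/- Let P₁ be the determinant of the generic traceless 3×3 matrix, i.e. P₁ = det ![![x₁,x₂,x₃],![x₄,x₅,x₆],![x₇,x₈,-x₁-x₅]], viewed as a polynomial in x₁,…,x₈. The partial derivatives ∂P₁/∂x₁,…,∂P₁/∂x₈ span an 8-dimensional space; in particular, viewing P₁ as a polynomial in 9 variables x₁,…,x₉ (not involving x₉), the span of its nine partial derivatives has dimension exactly 8. -/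
open MvPolynomial Matrix

noncomputable def P₁ : MvPolynomial (Fin 9) ℂ :=
  Matrix.det !![X 0, X 1, X 2; X 3, X 4, X 5; X 6, X 7, -X 0 - X 4]

private noncomputable def w : Fin 8 → MvPolynomial (Fin 9) ℂ :=
  fun i => MvPolynomial.pderiv i.castSucc P₁

private lemma hw0 : w 0 = X 1 * X 3 - X 0 * X 4 - X 0 * X 4 - X 4 * X 4 - X 5 * X 7 := by
  simp [w, P₁, det_fin_three, pderiv_mul, pderiv_X, show (Fin.castSucc 0 : Fin 9) = 0 from rfl]
  try ring
private lemma hw1 : w 1 = X 0 * X 3 + X 3 * X 4 + X 5 * X 6 := by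
  simp [w, P₁, det_fin_three, pderiv_mul, pderiv_X, show (Fin.castSucc 1 : Fin 9) = 1 from rfl]
  try ring
private lemma hw2 : w 2 = X 3 * X 7 - X 4 * X 6 := by
  simp [w, P₁, det_fin_three, pderiv_mul, pderiv_X, show (Fin.castSucc 2 : Fin 9) = 2 from rfl]
  try ring
private lemma hw3 : w 3 = X 0 * X 1 + X 1 * X 4 + X 2 * X 7 := by
  simp [w, P₁, det_fin_three, pderiv_mul, pderiv_X, show (Fin.castSucc 3 : Fin 9) = 3 from rfl]
  try ring
private lemma hw4 : w 4 = X 1 * X 3 - X 0 * X 0 - X 0 * X 4 - X 0 * X 4 - X 2 * X 6 := by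
  simp [w, P₁, det_fin_three, pderiv_mul, pderiv_X, show (Fin.castSucc 4 : Fin 9) = 4 from rfl]
  try ring
private lemma hw5 : w 5 = X 1 * X 6 - X 0 * X 7 := by
  simp [w, P₁, det_fin_three, pderiv_mul, pderiv_X, show (Fin.castSucc 5 : Fin 9) = 5 from rfl]
  try ring
private lemma hw6 : w 6 = X 1 * X 5 - X 2 * X 4 := by
  simp [w, P₁, det_fin_three, pderiv_mul, pderiv_X, show (Fin.castSucc 6 : Fin 9) = 6 from rfl]
  try ring
private lemma hw7 : w 7 = X 2 * X 3 - X 0 * X 5 := by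
  simp [w, P₁, det_fin_three, pderiv_mul, pderiv_X, show (Fin.castSucc 7 : Fin 9) = 7 from rfl]
  try ring

private lemma hlast : MvPolynomial.pderiv (8 : Fin 9) P₁ = 0 := by
  simp [P₁, det_fin_three, pderiv_X]

set_option maxHeartbeats 2000000 in
private lemma w_indep : LinearIndependent ℂ w := by
  rw [Fintype.linearIndependent_iff]
  intro g hg
  rw [Fin.sum_univ_eight, hw0, hw1, hw2, hw3, hw4, hw5, hw6, hw7] at hg
  have key : ∀ a b : Fin 9, MvPolynomial.constantCoeff
      (pderiv a (pderiv b ((g 0 • (X 1 * X 3 - X 0 * X 4 - X 0 * X 4 - X 4 * X 4 - X 5 * X 7)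
        + g 1 • (X 0 * X 3 + X 3 * X 4 + X 5 * X 6)
        + g 2 • (X 3 * X 7 - X 4 * X 6)
        + g 3 • (X 0 * X 1 + X 1 * X 4 + X 2 * X 7)
        + g 4 • (X 1 * X 3 - X 0 * X 0 - X 0 * X 4 - X 0 * X 4 - X 2 * X 6)
        + g 5 • (X 1 * X 6 - X 0 * X 7)
        + g 6 • (X 1 * X 5 - X 2 * X 4)
        + g 7 • (X 2 * X 3 - X 0 * X 5) : MvPolynomial (Fin 9) ℂ)))) = 0 := by
    intro a b; rw [hg]; simp
  have h0 := key 4 4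
  have h1 := key 5 6
  have h2 := key 3 7
  have h3 := key 2 7
  have h4 := key 2 6
  have h5 := key 0 7
  have h6 := key 1 5
  have h7 := key 0 5
  simp only [map_add, Derivation.map_smul, _root_.map_smul, smul_eq_mul, map_sub, _root_.map_mul,
    pderiv_mul, pderiv_X, Pi.single_apply, constantCoeff_X, map_zero] at h0 h1 h2 h3 h4 h5 h6 h7
  simp at h0 h1 h2 h3 h4 h5 h6 h7
  intro i
  fin_cases i <;> assumption

theorem P₁_pderiv_span_dim :
    Module.finrank ℂ
        (Submodule.span ℂ (Set.range fun i : Fin 9 => MvPolynomial.pderiv i P₁)) = 8 := by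
  have hr : (Set.range fun i : Fin 9 => MvPolynomial.pderiv i P₁) = insert 0 (Set.range w) := by
    ext p
    constructor
    · rintro ⟨i, rfl⟩
      induction i using Fin.lastCases with
      | last => left; exact hlast.symm ▸ rfl
      | cast j => right; exact ⟨j, rfl⟩
    · rintro (rfl | ⟨j, rfl⟩)
      · exact ⟨8, hlast⟩
      · exact ⟨j.castSucc, rfl⟩
  rw [hr, Submodule.span_insert_zero, finrank_span_eq_card w_indep, Fintype.card_fin]
end
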